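/- Let u : D₁ → ℝ be continuous with ‖u‖_{L^∞(D_r)} ≤ C for some r ∈ (0,1). Then for all x, y ∈ D_r, the conformal distance satisfies d_g(x,y) ≥ e^{−C} · min{|x − y|, 2r − |x| − |y|}, where d_g(x,y) is the infimum over C¹ curves γ in D_r from x to y of ∫₀¹ e^{u(γ(t))}|γ'(t)| dt. -/

import Mathlib

open Metric Set MeasureTheory

/-! The minimum is at most `‖x - y‖`, which is at most the Euclidean length of `γ`, and on
`D_r` the conformal factor `e^u` is at least `e^{-C}`. -/

section Speed

variable {E : Type*} [NormedAddCommGroup E] [NormedSpace ℝ E] {γ : ℝ → E} {a b : ℝ}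

theorem ContDiffOn.intervalIntegrable_deriv (hab : a ≤ b) (hγ : ContDiffOn ℝ 1 γ (Icc a b)) :
    IntervalIntegrable (deriv γ) volume a b := by
  rcases hab.eq_or_lt with rfl | hlt
  · exact .refl
  have hcont : ContinuousOn (derivWithin γ (Icc a b)) (Icc a b) :=
    hγ.continuousOn_derivWithin (uniqueDiffOn_Icc hlt) le_rfl
  refine (hcont.intervalIntegrable_of_Icc hab).congr_uIoo fun t ht ↦ ?_
  rw [uIoo_of_le hab] at ht
  exact derivWithin_of_mem_nhds (Icc_mem_nhds ht.1 ht.2)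

theorem ContDiffOn.norm_sub_le_integral_norm_deriv (hab : a ≤ b)
    (hγ : ContDiffOn ℝ 1 γ (Icc a b)) :
    ‖γ b - γ a‖ ≤ ∫ t in a..b, ‖deriv γ t‖ :=
  norm_sub_le_integral_of_norm_deriv_le_of_le hab hγ.continuousOn
    ((hγ.mono Ioo_subset_Icc_self).differentiableOn one_ne_zero) (.of_forall fun _ _ ↦ le_rfl)
    (hγ.intervalIntegrable_deriv hab).norm

end Speed

theorem stmt1_general (u : EuclideanSpace ℝ (Fin 2) → ℝ) (C r : ℝ) (hr1 : r < 1)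
    (hu : ContinuousOn u (ball (0 : EuclideanSpace ℝ (Fin 2)) 1))
    (hbound : ∀ z ∈ ball (0 : EuclideanSpace ℝ (Fin 2)) r, |u z| ≤ C)
    (x y : EuclideanSpace ℝ (Fin 2))
    (γ : ℝ → EuclideanSpace ℝ (Fin 2)) (hγ : ContDiffOn ℝ 1 γ (Set.Icc 0 1))
    (hγmem : ∀ t ∈ Set.Icc (0:ℝ) 1, γ t ∈ ball (0 : EuclideanSpace ℝ (Fin 2)) r)
    (hγ0 : γ 0 = x) (hγ1 : γ 1 = y) :
    Real.exp (-C) * min ‖x - y‖ (2 * r - ‖x‖ - ‖y‖) ≤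
      ∫ t in (0:ℝ)..1, Real.exp (u (γ t)) * ‖deriv γ t‖ := by
  have hlength : ‖x - y‖ ≤ ∫ t in (0:ℝ)..1, ‖deriv γ t‖ := by
    simpa only [hγ0, hγ1, norm_sub_rev] using hγ.norm_sub_le_integral_norm_deriv zero_le_one
  have hspeed := (hγ.intervalIntegrable_deriv zero_le_one).norm
  have hweight : ContinuousOn (fun t ↦ Real.exp (u (γ t))) (Icc 0 1) :=
    Real.continuous_exp.comp_continuousOn <| hu.comp hγ.continuousOn fun t ht ↦
      ball_subset_ball hr1.le (hγmem t ht)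
  have hweight_ge : ∀ t ∈ Icc (0 : ℝ) 1, Real.exp (-C) ≤ Real.exp (u (γ t)) := fun t ht ↦
    Real.exp_le_exp.2 (neg_le_of_abs_le (hbound _ (hγmem t ht)))
  calc Real.exp (-C) * min ‖x - y‖ (2 * r - ‖x‖ - ‖y‖)
      ≤ Real.exp (-C) * ∫ t in (0:ℝ)..1, ‖deriv γ t‖ :=
        mul_le_mul_of_nonneg_left ((min_le_left _ _).trans hlength) (Real.exp_pos _).le
    _ = ∫ t in (0:ℝ)..1, Real.exp (-C) * ‖deriv γ t‖ :=
        (intervalIntegral.integral_const_mul _ _).symm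
    _ ≤ ∫ t in (0:ℝ)..1, Real.exp (u (γ t)) * ‖deriv γ t‖ :=
        intervalIntegral.integral_mono_on zero_le_one (hspeed.const_mul _)
          (hspeed.continuousOn_mul (by rwa [uIcc_of_le zero_le_one])) fun t ht ↦
          mul_le_mul_of_nonneg_right (hweight_ge t ht) (norm_nonneg _)

/-- If `u` is continuous on the unit disk with `‖u‖_{L^∞(D_r)} ≤ C`, then every `C¹`
curve `γ` inside `D_r` joining `x` and `y` has conformal length
`∫₀¹ e^{u(γ(t))}|γ'(t)| dt ≥ e^{-C} min{|x-y|, 2r - |x| - |y|}`; hence so does the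
conformal distance `d_g(x,y)`. -/
theorem stmt1 (u : EuclideanSpace ℝ (Fin 2) → ℝ) (C r : ℝ) (hr0 : 0 < r) (hr1 : r < 1)
    (hu : ContinuousOn u (ball (0 : EuclideanSpace ℝ (Fin 2)) 1))
    (hbound : ∀ z ∈ ball (0 : EuclideanSpace ℝ (Fin 2)) r, |u z| ≤ C)
    (x y : EuclideanSpace ℝ (Fin 2)) (hx : x ∈ ball (0 : EuclideanSpace ℝ (Fin 2)) r)
    (hy : y ∈ ball (0 : EuclideanSpace ℝ (Fin 2)) r)
    (γ : ℝ → EuclideanSpace ℝ (Fin 2)) (hγ : ContDiffOn ℝ 1 γ (Set.Icc 0 1))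
    (hγmem : ∀ t ∈ Set.Icc (0:ℝ) 1, γ t ∈ ball (0 : EuclideanSpace ℝ (Fin 2)) r)
    (hγ0 : γ 0 = x) (hγ1 : γ 1 = y) :
    Real.exp (-C) * min ‖x - y‖ (2 * r - ‖x‖ - ‖y‖) ≤
      ∫ t in (0:ℝ)..1, Real.exp (u (γ t)) * ‖deriv γ t‖ :=
  stmt1_general u C r hr1 hu hbound x y γ hγ hγmem hγ0 hγ1
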